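/- arXiv:1103.3770 — 2 statements merged into one kernel-verified Lean document; each statement's English description precedes it below -/
import Mathlib

section
/- Let γ be an open operation on a topological space X. Then for every subset A of X, sbd_γ*(scl_γ*(A)) ⊆ sbd_γ*(A). -/
open Set

/-- An operation on a topological space: `V ⊆ γ V` for every open `V`. -/
def OperationOn {X : Type*} [TopologicalSpace X] (γ : Set X → Set X) : Prop :=
  ∀ V : Set X, IsOpen V → V ⊆ γ V

/-- The γ-interior of a set. -/
def gInt {X : Type*} [TopologicalSpace X] (γ : Set X → Set X) (A : Set X) : Set X :=
  {x | x ∈ A ∧ ∃ N : Set X, IsOpen N ∧ x ∈ N ∧ γ N ⊆ A}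

/-- A set is γ-open iff it equals its γ-interior. -/
def GOpen {X : Type*} [TopologicalSpace X] (γ : Set X → Set X) (A : Set X) : Prop :=
  A = gInt γ A

/-- A set is γ-closed iff its complement is γ-open. -/
def GClosed {X : Type*} [TopologicalSpace X] (γ : Set X → Set X) (A : Set X) : Prop :=
  GOpen γ Aᶜ

/-- The γ-closure of a set. -/
def gCl {X : Type*} [TopologicalSpace X] (γ : Set X → Set X) (A : Set X) : Set X :=
  {x | ∀ U : Set X, IsOpen U → x ∈ U → (γ U ∩ A).Nonempty}

/-- The γ-boundary of a set. -/
def gBd {X : Type*} [TopologicalSpace X] (γ : Set X → Set X) (A : Set X) : Set X :=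
  gCl γ A ∩ gCl γ Aᶜ

/-- A set is γ*-semi-open iff there is a γ-open `O` with `O ⊆ A ⊆ gCl γ O`. -/
def GSemiOpen {X : Type*} [TopologicalSpace X] (γ : Set X → Set X) (A : Set X) : Prop :=
  ∃ O : Set X, GOpen γ O ∧ O ⊆ A ∧ A ⊆ gCl γ O

/-- A set is γ*-semi-closed iff its complement is γ*-semi-open. -/
def GSemiClosed {X : Type*} [TopologicalSpace X] (γ : Set X → Set X) (A : Set X) : Prop :=
  GSemiOpen γ Aᶜ

/-- The γ*-semi-closure: intersection of all γ*-semi-closed sets containing `A`. -/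
def sCl {X : Type*} [TopologicalSpace X] (γ : Set X → Set X) (A : Set X) : Set X :=
  ⋂₀ {F : Set X | GSemiClosed γ F ∧ A ⊆ F}

/-- The γ*-semi-interior: union of all γ*-semi-open sets contained in `A`. -/
def sInt {X : Type*} [TopologicalSpace X] (γ : Set X → Set X) (A : Set X) : Set X :=
  ⋃₀ {O : Set X | GSemiOpen γ O ∧ O ⊆ A}

/-- The γ*-semi-boundary. -/
def sBd {X : Type*} [TopologicalSpace X] (γ : Set X → Set X) (A : Set X) : Set X :=
  sCl γ A ∩ sCl γ Aᶜ

/-- The γ*-semi-exterior. -/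
def sExt {X : Type*} [TopologicalSpace X] (γ : Set X → Set X) (A : Set X) : Set X :=
  sInt γ Aᶜ

/-- γ is a regular operation. -/
def RegularOp {X : Type*} [TopologicalSpace X] (γ : Set X → Set X) : Prop :=
  ∀ (x : X) (U V : Set X), IsOpen U → IsOpen V → x ∈ U → x ∈ V →
    ∃ W : Set X, IsOpen W ∧ x ∈ W ∧ γ W ⊆ γ U ∩ γ V

/-- γ is an open operation. -/
def OpenOp {X : Type*} [TopologicalSpace X] (γ : Set X → Set X) : Prop :=
  ∀ (x : X) (U : Set X), IsOpen U → x ∈ U →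
    ∃ B : Set X, GOpen γ B ∧ x ∈ B ∧ B ⊆ γ U

/-- A set is semi-open in the sense of Levine. -/
def SemiOpenL {X : Type*} [TopologicalSpace X] (S : Set X) : Prop :=
  ∃ O : Set X, IsOpen O ∧ O ⊆ S ∧ S ⊆ closure O

/-- γ is a semi-regular operation. -/
def SemiRegularOp {X : Type*} [TopologicalSpace X] (γ : Set X → Set X) : Prop :=
  ∀ (x : X) (U V : Set X), SemiOpenL U → SemiOpenL V → x ∈ U → x ∈ V →
    ∃ W : Set X, SemiOpenL W ∧ x ∈ W ∧ γ W ⊆ γ U ∩ γ V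

/-- `f` is γ-semi-continuous: preimages of γ-open sets are γ*-semi-open. -/
def GSemiContinuous {X Y : Type*} [TopologicalSpace X] [TopologicalSpace Y]
    (γX : Set X → Set X) (γY : Set Y → Set Y) (f : X → Y) : Prop :=
  ∀ B : Set Y, GOpen γY B → GSemiOpen γX (f ⁻¹' B)

/-- `f` is γ-semi-open: images of γ-open sets are γ*-semi-open. -/
def GSemiOpenMap {X Y : Type*} [TopologicalSpace X] [TopologicalSpace Y]
    (γX : Set X → Set X) (γY : Set Y → Set Y) (f : X → Y) : Prop :=
  ∀ U : Set X, GOpen γX U → GSemiOpen γY (f '' U)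

lemma gCl_mono' {X : Type*} [TopologicalSpace X] (γ : Set X → Set X) {A B : Set X}
    (h : A ⊆ B) : gCl γ A ⊆ gCl γ B := by
  intro x hx U hU hxU
  obtain ⟨y, hy1, hy2⟩ := hx U hU hxU
  exact ⟨y, hy1, h hy2⟩

lemma gOpen_sUnion' {X : Type*} [TopologicalSpace X] (γ : Set X → Set X) {S : Set (Set X)}
    (h : ∀ s ∈ S, GOpen γ s) : GOpen γ (⋃₀ S) := by
  apply Set.Subset.antisymm
  · intro x hx
    obtain ⟨s, hs, hxs⟩ := hx
    have hEq := h s hs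
    rw [hEq] at hxs
    obtain ⟨hxA, N, hN, hxN, hsub⟩ := hxs
    exact ⟨⟨s, hs, hxA⟩, N, hN, hxN, fun y hy => ⟨s, hs, hsub hy⟩⟩
  · intro x hx; exact hx.1

lemma gSemiOpen_sUnion' {X : Type*} [TopologicalSpace X] (γ : Set X → Set X) {S : Set (Set X)}
    (h : ∀ s ∈ S, GSemiOpen γ s) : GSemiOpen γ (⋃₀ S) := by
  refine ⟨⋃₀ {o | ∃ s ∈ S, GOpen γ o ∧ o ⊆ s ∧ s ⊆ gCl γ o}, ?_, ?_, ?_⟩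
  · exact gOpen_sUnion' γ (by rintro o ⟨s, _, ho, _, _⟩; exact ho)
  · rintro x ⟨o, ⟨s, hs, _, hos, _⟩, hxo⟩
    exact ⟨s, hs, hos hxo⟩
  · rintro x ⟨s, hs, hxs⟩
    obtain ⟨o, ho, hos, hso⟩ := h s hs
    have hsub : o ⊆ ⋃₀ {o | ∃ s ∈ S, GOpen γ o ∧ o ⊆ s ∧ s ⊆ gCl γ o} :=
      fun y hy => ⟨o, ⟨s, hs, ho, hos, hso⟩, hy⟩
    exact gCl_mono' γ hsub (hso hxs)

lemma sCl_semiClosed {X : Type*} [TopologicalSpace X] (γ : Set X → Set X) (A : Set X) :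
    GSemiClosed γ (sCl γ A) := by
  unfold GSemiClosed sCl
  rw [Set.compl_sInter]
  apply gSemiOpen_sUnion'
  rintro s ⟨F, ⟨hF, _⟩, rfl⟩
  exact hF

theorem stmt3 {X : Type*} [TopologicalSpace X] (gamma : Set X -> Set X)
    (hop : OperationOn gamma) (hopen : OpenOp gamma) :
    forall A : Set X, sBd gamma (sCl gamma A) ⊆ sBd gamma A := by
  intro A x ⟨hx1, hx2⟩
  constructor
  · exact hx1 (sCl gamma A) ⟨sCl_semiClosed gamma A, Set.Subset.rfl⟩
  · intro F hF
    apply hx2 F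
    exact ⟨hF.1, fun y hy => hF.2 (fun hyA => hy (fun F' hF' => hF'.2 hyA))⟩
end

section
/- Let γ be an operation on a topological space X. A subset A of X is γ*-semi-open if and only if A ∩ sbd_γ*(A) = ∅. -/
open Set

section

variable {X : Type*} [TopologicalSpace X] (γ : Set X → Set X)

theorem gOpen_sUnion {S : Set (Set X)} (hS : ∀ O ∈ S, GOpen γ O) : GOpen γ (⋃₀ S) := by
  refine Subset.antisymm ?_ fun _ hx => hx.1
  rintro x ⟨O, hO, hxO⟩
  rw [hS O hO] at hxO
  obtain ⟨hxO, N, hN, hxN, hγN⟩ := hxO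
  exact ⟨⟨O, hO, hxO⟩, N, hN, hxN, hγN.trans (subset_sUnion_of_mem hO)⟩

/-- The witness for `⋃₀ S` is the union of all γ-open witnesses of the members of `S`. -/
theorem gSemiOpen_sUnion {S : Set (Set X)} (hS : ∀ A ∈ S, GSemiOpen γ A) :
    GSemiOpen γ (⋃₀ S) := by
  set T := {O : Set X | GOpen γ O ∧ ∃ A ∈ S, O ⊆ A ∧ A ⊆ gCl γ O}
  refine ⟨⋃₀ T, gOpen_sUnion γ fun O hO => hO.1, ?_, ?_⟩
  · rintro x ⟨O, ⟨-, A, hA, hOA, -⟩, hxO⟩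
    exact ⟨A, hA, hOA hxO⟩
  · rintro x ⟨A, hA, hxA⟩ U hU hxU
    obtain ⟨O, hO, hOA, hAO⟩ := hS A hA
    obtain ⟨y, hyU, hyO⟩ := hAO hxA U hU hxU
    exact ⟨y, hyU, O, ⟨hO, A, hA, hOA, hAO⟩, hyO⟩

theorem subset_sCl (A : Set X) : A ⊆ sCl γ A :=
  fun _ hx _ hF => hF.2 hx

theorem sCl_subset {A F : Set X} (hF : GSemiClosed γ F) (hAF : A ⊆ F) : sCl γ A ⊆ F :=
  sInter_subset_of_mem ⟨hF, hAF⟩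

theorem gSemiClosed_sCl (A : Set X) : GSemiClosed γ (sCl γ A) := by
  rw [GSemiClosed, sCl, compl_sInter]
  exact gSemiOpen_sUnion γ (forall_mem_image.2 fun F hF => hF.1)

theorem gSemiClosed_iff_sCl_subset {F : Set X} : GSemiClosed γ F ↔ sCl γ F ⊆ F :=
  ⟨fun hF => sCl_subset γ hF subset_rfl,
    fun h => (Subset.antisymm h (subset_sCl γ F)) ▸ gSemiClosed_sCl γ F⟩

end

theorem stmt4_general {X : Type*} [TopologicalSpace X] (gamma : Set X -> Set X)
    (A : Set X) :
    GSemiOpen gamma A ↔ A ∩ sBd gamma A = ∅ := by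
  have hbd : A ∩ sBd gamma A = A ∩ sCl gamma Aᶜ := by
    rw [sBd, ← inter_assoc, inter_eq_left.2 (subset_sCl gamma A)]
  rw [hbd, ← disjoint_iff_inter_eq_empty, disjoint_comm, ← subset_compl_iff_disjoint_right,
    ← gSemiClosed_iff_sCl_subset, GSemiClosed, compl_compl]

theorem stmt4 {X : Type*} [TopologicalSpace X] (gamma : Set X -> Set X)
    (hop : OperationOn gamma) (A : Set X) :
    GSemiOpen gamma A ↔ A ∩ sBd gamma A = ∅ :=
  stmt4_general gamma A
end
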